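/- Let ∃X[F] be an ∃CNF formula and suppose the D-sequents (∃X[F], q′, W′) → Z and (∃X[F], q″, W″) → Z hold, where Vars(q′) ∩ W″ = Vars(q″) ∩ W′ = ∅. Let q′ and q″ be resolvable on a variable v ∈ V(F) and let q be their resolvent. Then the D-sequent (∃X[F], q, W′ ∪ W″) → Z holds as well. -/

import Mathlib

open scoped Classical

namespace QE

variable {α : Type*}

/-- A literal: a variable together with a polarity. -/
abbrev Lit (α : Type*) := α × Bool

/-- A clause: a finite disjunction of literals. -/
abbrev Clause (α : Type*) := Finset (Lit α)

/-- A CNF formula: a finite conjunction of clauses. -/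
abbrev CNF (α : Type*) := Finset (Clause α)

/-- A (partial) assignment of Boolean values to variables. -/
abbrev Assign (α : Type*) := α → Option Bool

/-- The variables of a clause. -/
def clauseVars (C : Clause α) : Set α := {v | ∃ b, (v, b) ∈ C}

/-- The variables of a CNF formula. -/
def cnfVars (F : CNF α) : Set α := ⋃ C ∈ F, clauseVars C

/-- The variables assigned by a partial assignment. -/
def avars (q : Assign α) : Set α := {v | q v ≠ none}

/-- The (partial) assignment `r` extends the (partial) assignment `q`, i.e. `q ⊆ r`. -/
def AExtends (q r : Assign α) : Prop := ∀ v b, q v = some b → r v = some b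

/-- The complete assignment (point) `p` extends the partial assignment `q`, i.e. `q ⊆ p`. -/
def PExtends (q : Assign α) (p : α → Bool) : Prop := ∀ v b, q v = some b → p v = b

/-- A complete assignment satisfies a clause. -/
def pointSatClause (p : α → Bool) (C : Clause α) : Prop := ∃ l ∈ C, p l.1 = l.2

/-- A complete assignment satisfies a CNF formula. -/
def pointSatCNF (p : α → Bool) (F : CNF α) : Prop := ∀ C ∈ F, pointSatClause p C

/-- A partial assignment satisfies a clause. -/
def asatClause (q : Assign α) (C : Clause α) : Prop := ∃ l ∈ C, q l.1 = some l.2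

/-- A partial assignment falsifies a literal. -/
def afalsLit (q : Assign α) (l : Lit α) : Prop := q l.1 = some (!l.2)

/-- The cofactor of a clause: remove the literals falsified by `q`. -/
noncomputable def cofClause (q : Assign α) (C : Clause α) : Clause α :=
  C.filter (fun l => ¬ afalsLit q l)

/-- The cofactor `F|q`: remove clauses satisfied by `q` and delete from the
remaining clauses all literals falsified by `q`. -/
noncomputable def cofactor (q : Assign α) (F : CNF α) : CNF α :=
  (F.filter (fun C => ¬ asatClause q C)).image (cofClause q)

/-- The CNF formula `F` implies the clause `C`. -/
def Implies (F : CNF α) (C : Clause α) : Prop :=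
  ∀ p : α → Bool, pointSatCNF p F → pointSatClause p C

/-- `C` is a `Z`-clause: `V(C) ∩ Z ≠ ∅`. -/
def IsZClause (Z : Set α) (C : Clause α) : Prop := (clauseVars C ∩ Z).Nonempty

/-- `F^Z`: the set of `Z`-clauses of `F`. -/
noncomputable def zClauses (F : CNF α) (Z : Set α) : CNF α :=
  F.filter (fun C => IsZClause Z C)

/-- `p` is a `Z`-boundary point of `F`: `Z ≠ ∅`, `p` falsifies `F`, every clause of `F`
falsified by `p` is a `Z`-clause, and the latter condition fails for every proper subset of `Z`. -/
def BoundaryPt (F : CNF α) (Z : Set α) (p : α → Bool) : Prop :=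
  Z.Nonempty ∧ ¬ pointSatCNF p F ∧
  (∀ C ∈ F, ¬ pointSatClause p C → IsZClause Z C) ∧
  (∀ Z' ⊂ Z, ¬ (∀ C ∈ F, ¬ pointSatClause p C → IsZClause Z' C))

/-- A point `p` is `W`-removable in `F`: there is a clause `C` such that `F` implies `C`,
`p` falsifies `C`, and `V(C) ∩ W = ∅`. -/
def Removable (F : CNF α) (W : Set α) (p : α → Bool) : Prop :=
  ∃ C : Clause α, Implies F C ∧ ¬ pointSatClause p C ∧ clauseVars C ∩ W = ∅

/-- The variables of `Z` are redundant in `∃X[F]` with scope `W`: for every nonempty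
subset `Vs ⊆ Z` there is no `W`-removable `Vs`-boundary point of `F`. -/
def RedundantWithScope (F : CNF α) (Z W : Set α) : Prop :=
  ∀ Vs : Set α, Vs ⊆ Z → Vs.Nonempty →
    ∀ p : α → Bool, BoundaryPt F Vs p → ¬ Removable F W p

/-- The D-sequent `(∃X[F], q, W) → Z`: the variables of `Z` are redundant
in `∃X[F|q]` with scope `W`. -/
def DSeq (F : CNF α) (X : Set α) (q : Assign α) (W Z : Set α) : Prop :=
  RedundantWithScope (cofactor q F) Z W

/-- `∃X[F] ≡ ∃X[H]`. -/
def ExEquiv (X : Set α) (F H : CNF α) : Prop :=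
  ∀ p : α → Bool,
    (∃ p' : α → Bool, (∀ v ∉ X, p' v = p v) ∧ pointSatCNF p' F) ↔
    (∃ p' : α → Bool, (∀ v ∉ X, p' v = p v) ∧ pointSatCNF p' H)

/-- The variables of `Z` are redundant in `∃X[F]`: `∃X[F] ≡ ∃X[F \ F^Z]`. -/
noncomputable def Redundant (F : CNF α) (X Z : Set α) : Prop :=
  ExEquiv X F (F \ zClauses F Z)

/-- Clauses `C` and `C'` contain opposite literals of the variable `w`. -/
def oppLitOn (C C' : Clause α) (w : α) : Prop := ∃ b, (w, b) ∈ C ∧ (w, !b) ∈ C'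

/-- Clauses `C` and `C'` are resolvable on `v`: they contain opposite literals of
exactly one variable, namely `v`. -/
def ResolvableOn (C C' : Clause α) (v : α) : Prop := ∀ w, oppLitOn C C' w ↔ w = v

/-- A variable `v` is blocked in `F`: no two clauses of `F` are resolvable on `v`. -/
def BlockedVar (F : CNF α) (v : α) : Prop :=
  ∀ C ∈ F, ∀ C' ∈ F, ¬ ResolvableOn C C' v

/-- Assignments `q` and `q'` assign opposite values to the variable `w`. -/
def aOppOn (q q' : Assign α) (w : α) : Prop := ∃ b, q w = some b ∧ q' w = some (!b)

/-- Assignments `q` and `q'` are resolvable on `v`: exactly one variable assigned by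
both of them, namely `v`, is assigned opposite values. -/
def AResolvableOn (q q' : Assign α) (v : α) : Prop := ∀ w, aOppOn q q' w ↔ w = v

/-- The resolvent of assignments `q` and `q'` on `v`: all single-variable assignments
of `q` and `q'` except those to `v`. -/
noncomputable def aResolvent (q q' : Assign α) (v : α) : Assign α :=
  fun w => if w = v then none else ((q w).orElse (fun _ => q' w))

/-!
A boundary point `p` of `F|r`, and its removability, only depend on the values of `p` on
`V(F|r)`, which `r` does not assign; and for a point extending `r` both notions agree with the
same notions in `F` itself, as long as `Vars(r)` avoids the variables concerned. So a removable
boundary point of `F|q` may be assumed to extend `q`, and then, according to its value at `v`,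
it also extends `q'` or `q''`. It is then a `W'`-removable boundary point of `F|q'` or a
`W''`-removable one of `F|q''`, which one of the two given D-sequents forbids.
-/

open Set

lemma pointSatClause_congr {p p' : α → Bool} {C : Clause α} (h : EqOn p p' (clauseVars C)) :
    pointSatClause p C ↔ pointSatClause p' C := by
  constructor <;> rintro ⟨l, hl, hpl⟩ <;> refine ⟨l, hl, ?_⟩
  · rwa [← h ⟨l.2, hl⟩]
  · rwa [h ⟨l.2, hl⟩]

lemma clauseVars_subset_cnfVars {F : CNF α} {C : Clause α} (hC : C ∈ F) :
    clauseVars C ⊆ cnfVars F :=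
  subset_biUnion_of_mem (u := clauseVars) hC

lemma pointSatCNF_congr {p p' : α → Bool} {F : CNF α} (h : EqOn p p' (cnfVars F)) :
    pointSatCNF p F ↔ pointSatCNF p' F :=
  forall₂_congr fun _ hC => pointSatClause_congr (h.mono (clauseVars_subset_cnfVars hC))

lemma cnfVars_finite (F : CNF α) : (cnfVars F).Finite := by
  refine F.finite_toSet.biUnion fun C _ => (C.finite_toSet.image Prod.fst).subset ?_
  rintro w ⟨b, hb⟩
  exact ⟨(w, b), hb, rfl⟩

lemma removable_iff {G : CNF α} {W : Set α} {p : α → Bool} :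
    Removable G W p ↔ ∀ s : α → Bool, EqOn s p Wᶜ → ¬ pointSatCNF s G := by
  constructor
  · rintro ⟨C, hGC, hpC, hCW⟩ s hsp hsG
    obtain ⟨l, hl, hsl⟩ := hGC s hsG
    have hlW : l.1 ∉ W := fun hw => hCW.subset ⟨⟨l.2, hl⟩, hw⟩
    exact hpC ⟨l, hl, hsp hlW ▸ hsl⟩
  · intro h
    -- the weakest clause falsified by `p` that avoids `W`
    let C : Clause α := ((cnfVars_finite G).sdiff (t := W)).toFinset.image fun w => (w, !p w)
    refine ⟨C, fun s hsG => ?_, ?_, ?_⟩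
    · by_contra hsC
      let s' : α → Bool := fun w => if w ∈ cnfVars G then s w else p w
      refine h s' (fun w hw => ?_) ((pointSatCNF_congr fun w hw => ?_).mp hsG)
      · by_cases hwG : w ∈ cnfVars G
        · have hmem : (w, !p w) ∈ C :=
            Finset.mem_image_of_mem _ ((Set.Finite.mem_toFinset _).mpr ⟨hwG, hw⟩)
          have : s w ≠ !p w := fun hs => hsC ⟨_, hmem, hs⟩
          simpa [s', hwG] using this
        · simp [s', hwG]
      · simp [s', hw]
    · rintro ⟨l, hl, hpl⟩
      obtain ⟨w, -, rfl⟩ := Finset.mem_image.mp hl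
      simp at hpl
    · refine eq_empty_of_forall_notMem ?_
      rintro w ⟨⟨b, hb⟩, hwW⟩
      obtain ⟨x, hx, hxw⟩ := Finset.mem_image.mp hb
      cases hxw
      exact ((Set.Finite.mem_toFinset _).mp hx).2 hwW

lemma Removable.mono {G : CNF α} {W W₀ : Set α} {p : α → Bool} (h : W ⊆ W₀)
    (hp : Removable G W₀ p) : Removable G W p := by
  obtain ⟨C, hGC, hpC, hCW⟩ := hp
  exact ⟨C, hGC, hpC, subset_eq_empty (inter_subset_inter_right _ h) hCW⟩

lemma removable_congr {G : CNF α} {W : Set α} {p p' : α → Bool} (h : EqOn p p' (cnfVars G)) :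
    Removable G W p ↔ Removable G W p' := by
  suffices ∀ {p p' : α → Bool}, EqOn p p' (cnfVars G) → Removable G W p → Removable G W p' from
    ⟨this h, this h.symm⟩
  intro p p' h hp
  rw [removable_iff] at hp ⊢
  intro s hsp' hsG
  let s' : α → Bool := fun w => if w ∈ cnfVars G then s w else p w
  refine hp s' (fun w hw => ?_) ((pointSatCNF_congr fun w hw => ?_).mp hsG)
  · by_cases hwG : w ∈ cnfVars G
    · simp only [s', hwG, if_true]
      exact (hsp' hw).trans (h hwG).symm
    · simp [s', hwG]
  · simp [s', hw]

lemma boundaryPt_congr {G : CNF α} {Z : Set α} {p p' : α → Bool} (h : EqOn p p' (cnfVars G)) :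
    BoundaryPt G Z p ↔ BoundaryPt G Z p' := by
  have hsat : ∀ C ∈ G, (pointSatClause p C ↔ pointSatClause p' C) :=
    fun C hC => pointSatClause_congr (h.mono (clauseVars_subset_cnfVars hC))
  simp +contextual only [BoundaryPt, pointSatCNF, hsat]

section Cofactor

variable {r : Assign α} {p : α → Bool}

lemma mem_cofactor {F : CNF α} {C : Clause α} :
    C ∈ cofactor r F ↔ ∃ D ∈ F, ¬ asatClause r D ∧ cofClause r D = C := by
  simp only [cofactor, Finset.mem_image, Finset.mem_filter, and_assoc]

lemma cnfVars_cofactor_subset (F : CNF α) : cnfVars (cofactor r F) ⊆ (avars r)ᶜ := by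
  intro w hw hwr
  obtain ⟨C, hC, b, hwC⟩ : ∃ C ∈ cofactor r F, w ∈ clauseVars C := by
    simpa [cnfVars] using hw
  obtain ⟨D, -, hrD, rfl⟩ := mem_cofactor.mp hC
  obtain ⟨hwD, hwb⟩ := Finset.mem_filter.mp hwC
  obtain ⟨c, hc⟩ := Option.ne_none_iff_exists'.mp hwr
  cases Bool.eq_or_eq_not c b with
  | inl h => exact hrD ⟨(w, b), hwD, h ▸ hc⟩
  | inr h => exact hwb (by rw [afalsLit, hc, h])

lemma pointSatClause_of_asatClause (hp : PExtends r p) {D : Clause α} (h : asatClause r D) :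
    pointSatClause p D := by
  obtain ⟨l, hl, hrl⟩ := h
  exact ⟨l, hl, hp _ _ hrl⟩

lemma pointSatClause_cofClause_iff (hp : PExtends r p) {D : Clause α} :
    pointSatClause p (cofClause r D) ↔ pointSatClause p D := by
  constructor
  · rintro ⟨l, hl, hpl⟩
    exact ⟨l, (Finset.mem_filter.mp hl).1, hpl⟩
  · rintro ⟨l, hl, hpl⟩
    refine ⟨l, Finset.mem_filter.mpr ⟨hl, fun hrl => ?_⟩, hpl⟩
    simpa [hpl] using hp _ _ hrl

lemma pointSatCNF_cofactor_iff (hp : PExtends r p) {F : CNF α} :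
    pointSatCNF p (cofactor r F) ↔ pointSatCNF p F := by
  constructor
  · intro h D hD
    by_cases hrD : asatClause r D
    · exact pointSatClause_of_asatClause hp hrD
    · exact (pointSatClause_cofClause_iff hp).mp (h _ (mem_cofactor.mpr ⟨D, hD, hrD, rfl⟩))
  · intro h C hC
    obtain ⟨D, hD, -, rfl⟩ := mem_cofactor.mp hC
    exact (pointSatClause_cofClause_iff hp).mpr (h D hD)

lemma isZClause_cofClause_iff {Z : Set α} (hZ : Disjoint (avars r) Z) {D : Clause α} :
    IsZClause Z (cofClause r D) ↔ IsZClause Z D := by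
  constructor
  · rintro ⟨w, ⟨b, hb⟩, hwZ⟩
    exact ⟨w, ⟨b, (Finset.mem_filter.mp hb).1⟩, hwZ⟩
  · rintro ⟨w, ⟨b, hb⟩, hwZ⟩
    refine ⟨w, ⟨b, Finset.mem_filter.mpr ⟨hb, fun hrw => ?_⟩⟩, hwZ⟩
    exact hZ.notMem_of_mem_right hwZ (by simp [avars, afalsLit] at hrw ⊢; simp [hrw])

lemma falsified_isZClause_cofactor_iff (hp : PExtends r p) {F : CNF α} {Z : Set α}
    (hZ : Disjoint (avars r) Z) :
    (∀ C ∈ cofactor r F, ¬ pointSatClause p C → IsZClause Z C) ↔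
      ∀ D ∈ F, ¬ pointSatClause p D → IsZClause Z D := by
  constructor
  · intro h D hD hpD
    have hrD : ¬ asatClause r D := fun hrD => hpD (pointSatClause_of_asatClause hp hrD)
    refine (isZClause_cofClause_iff hZ).mp (h _ (mem_cofactor.mpr ⟨D, hD, hrD, rfl⟩) ?_)
    rwa [pointSatClause_cofClause_iff hp]
  · intro h C hC hpC
    obtain ⟨D, hD, -, rfl⟩ := mem_cofactor.mp hC
    rw [pointSatClause_cofClause_iff hp] at hpC
    exact (isZClause_cofClause_iff hZ).mpr (h D hD hpC)

lemma boundaryPt_cofactor_iff (hp : PExtends r p) {F : CNF α} {Z : Set α}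
    (hZ : Disjoint (avars r) Z) : BoundaryPt (cofactor r F) Z p ↔ BoundaryPt F Z p := by
  unfold BoundaryPt
  rw [pointSatCNF_cofactor_iff hp, falsified_isZClause_cofactor_iff hp hZ]
  refine and_congr_right' (and_congr_right' (and_congr_right' (forall₂_congr fun Z' hZ' => ?_)))
  rw [falsified_isZClause_cofactor_iff hp (hZ.mono_right hZ'.subset)]

/-- The points competing with `p` agree with it off `W`, so they extend `r`. -/
lemma removable_cofactor_iff (hp : PExtends r p) {F : CNF α} {W : Set α}
    (hW : Disjoint (avars r) W) : Removable (cofactor r F) W p ↔ Removable F W p := by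
  simp only [removable_iff]
  refine forall_congr' fun s => imp_congr_right fun hsp => ?_
  have hs : PExtends r s := fun w b hrw => by
    rw [hsp (hW.notMem_of_mem_left (by simp [avars, hrw])), hp w b hrw]
  rw [pointSatCNF_cofactor_iff hs]

end Cofactor

lemma not_removable_of_redundantWithScope_cofactor {F : CNF α} {r r' : Assign α}
    {Z W W₀ Vs : Set α} {p : α → Bool}
    (hred : RedundantWithScope (cofactor r' F) Z W) (hZW : Z ⊆ W) (hWW₀ : W ⊆ W₀)
    (hrW : Disjoint (avars r) W) (hr'W : Disjoint (avars r') W)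
    (hpr : PExtends r p) (hpr' : PExtends r' p)
    (hVsZ : Vs ⊆ Z) (hbp : BoundaryPt (cofactor r F) Vs p) :
    ¬ Removable (cofactor r F) W₀ p := by
  intro hrm
  have hVsW : Vs ⊆ W := hVsZ.trans hZW
  refine hred Vs hVsZ hbp.1 p ?_ ?_
  · rw [boundaryPt_cofactor_iff hpr' (hr'W.mono_right hVsW)]
    rwa [boundaryPt_cofactor_iff hpr (hrW.mono_right hVsW)] at hbp
  · rw [removable_cofactor_iff hpr' hr'W, ← removable_cofactor_iff hpr hrW]
    exact hrm.mono hWW₀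

section Resolvent

variable {q' q'' : Assign α} {v : α}

lemma aResolvent_self : aResolvent q' q'' v v = none := if_pos rfl

lemma avars_aResolvent_subset : avars (aResolvent q' q'' v) ⊆ avars q' ∪ avars q'' := by
  intro w hw
  by_contra hw'
  simp only [avars, mem_union, mem_ofPred_eq, not_or, not_not] at hw'
  simp [avars, aResolvent, hw'.1, hw'.2] at hw

lemma PExtends.of_aResolvent_left {p : α → Bool} (hp : PExtends (aResolvent q' q'' v) p)
    (hv : q' v = some (p v)) : PExtends q' p := by
  intro w b hw
  by_cases hwv : w = v
  · subst hwv
    exact Option.some.inj (hv.symm.trans hw)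
  · exact hp w b (by simp [aResolvent, hwv, hw])

lemma PExtends.of_aResolvent_right {p : α → Bool} (hres : AResolvableOn q' q'' v)
    (hp : PExtends (aResolvent q' q'' v) p) (hv : q'' v = some (p v)) : PExtends q'' p := by
  intro w b hw
  by_cases hwv : w = v
  · subst hwv
    exact Option.some.inj (hv.symm.trans hw)
  · cases hw' : q' w with
    | none => exact hp w b (by simp [aResolvent, hwv, hw, hw'])
    | some c =>
      have hc : c = b := by
        by_contra hcb
        exact hwv ((hres w).mp ⟨c, hw', by rw [hw, Bool.eq_not_of_ne (Ne.symm hcb)]⟩)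
      exact hp w b (by simp [aResolvent, hwv, hw', hc])

end Resolvent

theorem dseq_join_general {α : Type*} (F : CNF α) (X Z W' W'' : Set α) (q' q'' : Assign α) (v : α)
    (hZW' : Z ⊆ W') (hW'q : W' ⊆ X \ avars q')
    (hZW'' : Z ⊆ W'') (hW''q : W'' ⊆ X \ avars q'')
    (hd1 : avars q' ∩ W'' = ∅) (hd2 : avars q'' ∩ W' = ∅)
    (hres : AResolvableOn q' q'' v)
    (hds1 : DSeq F X q' W' Z) (hds2 : DSeq F X q'' W'' Z) :
    DSeq F X (aResolvent q' q'' v) (W' ∪ W'') Z := by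
  intro Vs hVsZ _ p hbp hrm
  obtain ⟨b, hq'v, hq''v⟩ : aOppOn q' q'' v := (hres v).mpr rfl
  set q := aResolvent q' q'' v
  have hq'W' : Disjoint (avars q') W' := (subset_sdiff.mp hW'q).2.symm
  have hq''W'' : Disjoint (avars q'') W'' := (subset_sdiff.mp hW''q).2.symm
  have hqW' : Disjoint (avars q) W' :=
    (disjoint_union_left.mpr ⟨hq'W', disjoint_iff_inter_eq_empty.mpr hd2⟩).mono_left
      avars_aResolvent_subset
  have hqW'' : Disjoint (avars q) W'' :=
    (disjoint_union_left.mpr ⟨disjoint_iff_inter_eq_empty.mpr hd1, hq''W''⟩).mono_left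
      avars_aResolvent_subset
  let p₁ : α → Bool := fun w => (q w).getD (p w)
  have hp₁ : PExtends q p₁ := fun w c hw => by simp [p₁, hw]
  have hpp₁ : EqOn p p₁ (cnfVars (cofactor q F)) := fun w hw => by
    simp [p₁, show q w = none by simpa [avars] using cnfVars_cofactor_subset F hw]
  have hbp₁ := (boundaryPt_congr hpp₁).mp hbp
  have hrm₁ := (removable_congr hpp₁).mp hrm
  have hp₁v : p₁ v = p v := by simp [p₁, q, aResolvent_self]
  cases Bool.eq_or_eq_not (p v) b with
  | inl hb =>
    exact not_removable_of_redundantWithScope_cofactor hds1 hZW' subset_union_left hqW' hq'W'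
      hp₁ (hp₁.of_aResolvent_left (by rw [hp₁v, hb, hq'v])) hVsZ hbp₁ hrm₁
  | inr hb =>
    exact not_removable_of_redundantWithScope_cofactor hds2 hZW'' subset_union_right hqW''
      hq''W'' hp₁ (hp₁.of_aResolvent_right hres (by rw [hp₁v, hb, hq''v])) hVsZ hbp₁ hrm₁

/-- Proposition 9, join rule: If the D-sequents `(∃X[F], q', W') → Z` and
`(∃X[F], q'', W'') → Z` hold, `Vars(q') ∩ W'' = Vars(q'') ∩ W' = ∅`, and `q'`, `q''` are
resolvable on `v ∈ V(F)` with resolvent `q`, then the D-sequent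
`(∃X[F], q, W' ∪ W'') → Z` holds as well. -/
theorem dseq_join {α : Type*} (F : CNF α) (X Z W' W'' : Set α) (q' q'' : Assign α) (v : α)
    (hX : X ⊆ cnfVars F) (hq' : avars q' ⊆ cnfVars F) (hq'' : avars q'' ⊆ cnfVars F)
    (hZW' : Z ⊆ W') (hW'q : W' ⊆ X \ avars q')
    (hZW'' : Z ⊆ W'') (hW''q : W'' ⊆ X \ avars q'')
    (hd1 : avars q' ∩ W'' = ∅) (hd2 : avars q'' ∩ W' = ∅)
    (hv : v ∈ cnfVars F) (hres : AResolvableOn q' q'' v)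
    (hds1 : DSeq F X q' W' Z) (hds2 : DSeq F X q'' W'' Z) :
    DSeq F X (aResolvent q' q'' v) (W' ∪ W'') Z :=
  dseq_join_general F X Z W' W'' q' q'' v hZW' hW'q hZW'' hW''q hd1 hd2 hres hds1 hds2

end QE
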